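/- (Hellman–Raviv upper bound, Eq. (16) of the paper.) Let X and Y be random variables on a common probability space taking values in finite sets. Then the Bayes error probability p_e(X→Y) = 1 − Σ_x P(X=x) · max_y P(Y=y | X=x) satisfies p_e(X→Y) ≤ H(Y|X)/2, where H(Y|X) is measured in bits. -/
import Mathlib


open MeasureTheory ProbabilityTheory

/-- Probability that the random variable `X` takes the value `x` under the measure `μ`. -/
noncomputable def prob {Ω : Type*} [MeasurableSpace Ω] (μ : Measure Ω)
    {S : Type*} (X : Ω → S) (x : S) : ℝ :=
  (μ (X ⁻¹' {x})).toReal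

/-- Shannon entropy (in bits) of a finite-valued random variable:
`H(X) = -∑ₓ P(X = x) log₂ P(X = x)`. -/
noncomputable def shannonEntropy {Ω : Type*} [MeasurableSpace Ω] (μ : Measure Ω)
    {S : Type*} [Fintype S] (X : Ω → S) : ℝ :=
  -∑ x, prob μ X x * Real.logb 2 (prob μ X x)

/-- Mutual information `I(X;Y) = H(X) + H(Y) - H(X,Y)`. -/
noncomputable def mutualInfo {Ω : Type*} [MeasurableSpace Ω] (μ : Measure Ω)
    {S T : Type*} [Fintype S] [Fintype T] (X : Ω → S) (Y : Ω → T) : ℝ :=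
  shannonEntropy μ X + shannonEntropy μ Y - shannonEntropy μ (fun ω => (X ω, Y ω))

/-- Conditional entropy `H(X|Z) = ∑_z P(Z = z) · H(X | Z = z)`, where `H(X | Z = z)` is the
entropy of `X` under the conditional distribution given `Z = z`. -/
noncomputable def condEntropy {Ω : Type*} [MeasurableSpace Ω] (μ : Measure Ω)
    {S T : Type*} [Fintype S] [Fintype T] (X : Ω → S) (Z : Ω → T) : ℝ :=
  ∑ z, prob μ Z z * shannonEntropy (μ[|Z ⁻¹' {z}]) X

/-- Conditional mutual information `I(X;Y|Z) = ∑_z P(Z = z) · I(X;Y | Z = z)`, where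
`I(X;Y | Z = z)` is the mutual information of `X` and `Y` under the conditional
distribution given `Z = z`. -/
noncomputable def condMutualInfo {Ω : Type*} [MeasurableSpace Ω] (μ : Measure Ω)
    {S T U : Type*} [Fintype S] [Fintype T] [Fintype U]
    (X : Ω → S) (Y : Ω → T) (Z : Ω → U) : ℝ :=
  ∑ z, prob μ Z z * mutualInfo (μ[|Z ⁻¹' {z}]) X Y

/-- Bayes error probability of predicting `Y` from `X`:
`p_e(X → Y) = 1 - ∑ₓ P(X = x) · max_y P(Y = y | X = x)`. -/
noncomputable def bayesError {Ω : Type*} [MeasurableSpace Ω] (μ : Measure Ω)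
    {S T : Type*} [Fintype S] [Fintype T] (X : Ω → S) (Y : Ω → T) : ℝ :=
  1 - ∑ x, prob μ X x * ⨆ y, prob (μ[|X ⁻¹' {x}]) Y y

private lemma aux_logA {m : ℝ} (h0 : 0 < m) (h1 : m ≤ 1/2) :
    2 * Real.log 2 * (1 - m) ≤ -Real.log m := by
  have hs : Real.log (2 * m) ≤ 2 * m - 1 := Real.log_le_sub_one_of_pos (by positivity)
  have h2 : Real.log (2 * m) = Real.log 2 + Real.log m :=
    Real.log_mul (by norm_num) (ne_of_gt h0)
  have hl2 : Real.log 2 ≤ 1 := by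
    have := Real.log_le_sub_one_of_pos (x := 2) (by norm_num); linarith
  have hl2' : (0:ℝ) < Real.log 2 := Real.log_pos (by norm_num)
  nlinarith [hs, h2]

private lemma aux_logB {m : ℝ} (h0 : 1/2 ≤ m) (h1 : m ≤ 1) :
    (1 - m) * Real.log 2 ≤ -(m * Real.log m) := by
  have hcc := Real.concaveOn_negMulLog
  have h := hcc.2 (Set.mem_Ici.2 (by norm_num : (0:ℝ) ≤ 1/2))
    (Set.mem_Ici.2 (by norm_num : (0:ℝ) ≤ 1))
    (by linarith : (0:ℝ) ≤ 2 * (1 - m)) (by linarith : (0:ℝ) ≤ 2 * m - 1) (by ring)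
  rw [smul_eq_mul, smul_eq_mul, smul_eq_mul, smul_eq_mul] at h
  have hm : 2 * (1 - m) * (1/2) + (2 * m - 1) * 1 = m := by ring
  rw [hm, Real.negMulLog_one] at h
  have h12 : Real.negMulLog (1/2) = (1/2) * Real.log 2 := by
    rw [Real.negMulLog, show (1/2 : ℝ) = 2⁻¹ by norm_num, Real.log_inv]; ring
  rw [h12, Real.negMulLog] at h
  nlinarith [h]

/-- `1 - t ≤ -(t * logb 2 t)` for `t ∈ [1/2, 1]`. -/
private lemma aux_logB' {t : ℝ} (h0 : 1/2 ≤ t) (h1 : t ≤ 1) :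
    1 - t ≤ -(t * Real.logb 2 t) := by
  have hl2 : (0:ℝ) < Real.log 2 := Real.log_pos (by norm_num)
  have hB := aux_logB h0 h1
  have h2 : -(t * Real.logb 2 t) = -(t * Real.log t) / Real.log 2 := by
    rw [Real.logb]; ring
  rw [h2, le_div_iff₀ hl2]
  nlinarith [hB]

/-- `t ≤ -(t * logb 2 t)` for `t ∈ [0, 1/2]`. -/
private lemma aux_small {t : ℝ} (h0 : 0 ≤ t) (h1 : t ≤ 1/2) :
    t ≤ -(t * Real.logb 2 t) := by
  rcases eq_or_lt_of_le h0 with h | h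
  · simp [← h]
  · have hle : Real.logb 2 t ≤ Real.logb 2 (1/2) :=
      Real.logb_le_logb_of_le (by norm_num) h h1
    have h12 : Real.logb 2 (1/2 : ℝ) = -1 := by
      rw [show (1/2 : ℝ) = 2⁻¹ by norm_num, Real.logb_inv, Real.logb_self_eq_one] <;> norm_num
    nlinarith [le_of_lt h]

/-- Each entropy term is nonnegative for `t ∈ [0,1]`. -/
private lemma aux_nonneg {t : ℝ} (h0 : 0 ≤ t) (h1 : t ≤ 1) :
    0 ≤ -(t * Real.logb 2 t) := by
  have : Real.logb 2 t ≤ 0 := Real.logb_nonpos (by norm_num) h0 h1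
  nlinarith

/-- Key pointwise lemma (generalized to superadditive "probability" vectors):
if `0 ≤ q y ≤ 1` and `∑ q ≥ 1`, then `1 - max q ≤ H(q)/2`. -/
private lemma key_lemma {T : Type*} [Fintype T] [Nonempty T] (q : T → ℝ)
    (h0 : ∀ y, 0 ≤ q y) (hub : ∀ y, q y ≤ 1) (h1 : 1 ≤ ∑ y, q y) :
    1 - ⨆ y, q y ≤ (-∑ y, q y * Real.logb 2 (q y)) / 2 := by
  classical
  obtain ⟨y₀, hy₀⟩ := Finite.exists_max q
  have hsup : (⨆ y, q y) = q y₀ :=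
    le_antisymm (ciSup_le hy₀) (le_ciSup (Finite.bddAbove_range q) y₀)
  set m := q y₀ with hm
  have hle1 : m ≤ 1 := hub y₀
  have hmpos : 0 < m := by
    by_contra h
    push_neg at h
    have hq : ∀ y, q y = 0 := fun y => le_antisymm (le_trans (hy₀ y) h) (h0 y)
    simp [hq] at h1
    linarith
  have hl2 : (0:ℝ) < Real.log 2 := Real.log_pos (by norm_num)
  have hNeg : ∑ y, -(q y * Real.logb 2 (q y)) = -∑ y, q y * Real.logb 2 (q y) := by
    rw [Finset.sum_neg_distrib]
  have hErase : 1 - m ≤ ∑ y ∈ Finset.univ.erase y₀, q y := by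
    have h := Finset.add_sum_erase Finset.univ q (Finset.mem_univ y₀)
    rw [← h] at h1; linarith
  rw [hsup, le_div_iff₀ (by norm_num : (0:ℝ) < 2)]
  rcases le_or_gt m (1/2) with hhalf | hhalf
  · -- every q y ≤ m ≤ 1/2 : H ≥ (∑ q) · (-logb 2 m) ≥ -logb 2 m ≥ 2(1-m)
    have hc : 0 ≤ -Real.logb 2 m := by
      have : Real.logb 2 m ≤ 0 := Real.logb_nonpos (by norm_num) (le_of_lt hmpos) hle1
      linarith
    have hterm : ∀ y, q y * (-Real.logb 2 m) ≤ -(q y * Real.logb 2 (q y)) := by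
      intro y
      rcases eq_or_lt_of_le (h0 y) with h | h
      · simp [← h]
      · have hle : Real.logb 2 (q y) ≤ Real.logb 2 m :=
          Real.logb_le_logb_of_le (by norm_num) h (hy₀ y)
        nlinarith [le_of_lt h]
    have hsum : ∑ y, q y * (-Real.logb 2 m) ≤ ∑ y, -(q y * Real.logb 2 (q y)) :=
      Finset.sum_le_sum (fun y _ => hterm y)
    rw [← Finset.sum_mul, hNeg] at hsum
    have h1c : -Real.logb 2 m ≤ (∑ y, q y) * -Real.logb 2 m := by nlinarith [h1, hc]
    have hA := aux_logA hmpos hhalf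
    have hA' : (1 - m) * 2 ≤ -Real.logb 2 m := by
      rw [Real.logb, ← neg_div, le_div_iff₀ hl2]
      nlinarith [hA]
    linarith
  · by_cases hbig : ∃ y ∈ Finset.univ.erase y₀, 1/2 < q y
    · -- two large atoms: use aux_logB' on both, drop the rest
      obtain ⟨y₁, hy₁mem, hy₁⟩ := hbig
      have hne : y₁ ≠ y₀ := (Finset.mem_erase.1 hy₁mem).1
      have hpair : -(q y₀ * Real.logb 2 (q y₀)) + -(q y₁ * Real.logb 2 (q y₁))
          ≤ ∑ y, -(q y * Real.logb 2 (q y)) := by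
        have hsub : ({y₀, y₁} : Finset T) ⊆ Finset.univ := Finset.subset_univ _
        have := Finset.sum_le_sum_of_subset_of_nonneg hsub
          (fun y _ _ => aux_nonneg (h0 y) (hub y))
        rwa [Finset.sum_pair (Ne.symm hne)] at this
      have hB0 : 1 - m ≤ -(m * Real.logb 2 m) := aux_logB' (le_of_lt hhalf) hle1
      have hB1 : 1 - q y₁ ≤ -(q y₁ * Real.logb 2 (q y₁)) :=
        aux_logB' (le_of_lt hy₁) (hub y₁)
      have hq1m : q y₁ ≤ m := hy₀ y₁
      rw [← hNeg]
      linarith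
    · -- all other atoms ≤ 1/2
      push_neg at hbig
      have hsplit : -(m * Real.logb 2 m) + ∑ y ∈ Finset.univ.erase y₀, -(q y * Real.logb 2 (q y))
          = ∑ y, -(q y * Real.logb 2 (q y)) :=
        Finset.add_sum_erase Finset.univ (fun y => -(q y * Real.logb 2 (q y)))
          (Finset.mem_univ y₀)
      have hsumrest : 1 - m ≤ ∑ y ∈ Finset.univ.erase y₀, -(q y * Real.logb 2 (q y)) :=
        le_trans hErase (Finset.sum_le_sum (fun y hy => aux_small (h0 y) (hbig y hy)))
      have hB : 1 - m ≤ -(m * Real.logb 2 m) := aux_logB' (le_of_lt hhalf) hle1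
      rw [← hNeg, ← hsplit]
      linarith

private lemma prob_nonneg' {Ω : Type*} [MeasurableSpace Ω] (μ : Measure Ω)
    {S : Type*} (X : Ω → S) (x : S) : 0 ≤ prob μ X x :=
  ENNReal.toReal_nonneg

private lemma prob_le_one' {Ω : Type*} [MeasurableSpace Ω] (μ : Measure Ω)
    [IsProbabilityMeasure μ] {S : Type*} (X : Ω → S) (x : S) : prob μ X x ≤ 1 := by
  have h : μ (X ⁻¹' {x}) ≤ 1 := prob_le_one
  calc prob μ X x = (μ (X ⁻¹' {x})).toReal := rfl
    _ ≤ (1 : ENNReal).toReal := ENNReal.toReal_mono (by norm_num) h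
    _ = 1 := by simp

private lemma one_le_sum_prob {Ω : Type*} [MeasurableSpace Ω] (μ : Measure Ω)
    [IsProbabilityMeasure μ] {S : Type*} [Fintype S] (X : Ω → S) :
    1 ≤ ∑ x, prob μ X x := by
  have hcover : (Set.univ : Set Ω) = ⋃ x, X ⁻¹' {x} := by
    ext ω; simp
  have hsub : μ Set.univ ≤ ∑' x, μ (X ⁻¹' {x}) := by
    rw [hcover]; exact measure_iUnion_le _
  rw [tsum_fintype] at hsub
  have hμ : μ Set.univ = 1 := measure_univ
  rw [hμ] at hsub
  have hne : ∀ x ∈ Finset.univ, μ (X ⁻¹' {x}) ≠ ⊤ := fun x _ => measure_ne_top μ _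
  have := ENNReal.toReal_mono (a := 1) (b := ∑ x, μ (X ⁻¹' {x}))
    (by rw [ne_eq, ENNReal.sum_eq_top]; push_neg; exact fun x _ => measure_ne_top μ _) hsub
  rw [ENNReal.toReal_one, ENNReal.toReal_sum hne] at this
  exact this

/-- Hellman–Raviv upper bound: the Bayes error probability of predicting `Y` from `X`
satisfies `p_e(X → Y) ≤ H(Y|X) / 2`. -/
theorem hellman_raviv_upper_bound
    {Ω S T : Type*} [MeasurableSpace Ω] [MeasurableSpace S] [MeasurableSpace T]
    [Fintype S] [Fintype T] [Nonempty T]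
    (μ : Measure Ω) [IsProbabilityMeasure μ]
    (X : Ω → S) (Y : Ω → T) (hX : Measurable X) (hY : Measurable Y) :
    bayesError μ X Y ≤ condEntropy μ Y X / 2 := by
  have hterm : ∀ x : S, prob μ X x * (1 - ⨆ y, prob (μ[|X ⁻¹' {x}]) Y y)
      ≤ prob μ X x * (shannonEntropy (μ[|X ⁻¹' {x}]) Y / 2) := by
    intro x
    rcases eq_or_lt_of_le (prob_nonneg' μ X x) with hp | hp
    · rw [← hp]; simp
    · have hne : μ (X ⁻¹' {x}) ≠ 0 := by
        intro h
        rw [prob, h] at hp; simp at hp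
      have : IsProbabilityMeasure (μ[|X ⁻¹' {x}]) := cond_isProbabilityMeasure hne
      refine mul_le_mul_of_nonneg_left ?_ (le_of_lt hp)
      exact key_lemma (fun y => prob (μ[|X ⁻¹' {x}]) Y y)
        (fun y => prob_nonneg' _ _ _) (fun y => prob_le_one' _ _ _)
        (one_le_sum_prob _ _)
  have hsum : ∑ x, prob μ X x * (1 - ⨆ y, prob (μ[|X ⁻¹' {x}]) Y y)
      ≤ ∑ x, prob μ X x * (shannonEntropy (μ[|X ⁻¹' {x}]) Y / 2) :=
    Finset.sum_le_sum (fun x _ => hterm x)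
  have hX1 : 1 ≤ ∑ x, prob μ X x := one_le_sum_prob μ X
  rw [bayesError, condEntropy]
  have hexp : ∑ x, prob μ X x * (1 - ⨆ y, prob (μ[|X ⁻¹' {x}]) Y y)
      = ∑ x, prob μ X x - ∑ x, prob μ X x * ⨆ y, prob (μ[|X ⁻¹' {x}]) Y y := by
    rw [← Finset.sum_sub_distrib]
    exact Finset.sum_congr rfl (fun x _ => by ring)
  have hdiv : ∑ x, prob μ X x * (shannonEntropy (μ[|X ⁻¹' {x}]) Y / 2)
      = (∑ x, prob μ X x * shannonEntropy (μ[|X ⁻¹' {x}]) Y) / 2 := by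
    rw [Finset.sum_div]
    exact Finset.sum_congr rfl (fun x _ => by ring)
  rw [hexp, hdiv] at hsum
  linarith
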